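/- arXiv:2011.02877 — 2 statements merged into one kernel-verified Lean document; each statement's English description precedes it below -/
import Mathlib

section
/- The minimax value V(G, D*) = −log 4 + 2·JSD(P‖Q) attains its global minimum value −log 4 exactly when P = Q. -/
open MeasureTheory Real

lemma key_aux (a b : ℝ) (ha : 0 ≤ a) (hb : 0 ≤ b) :
    0 ≤ a * Real.log (a/(a+b)) + b * Real.log (b/(a+b)) + (a+b) * Real.log 2 ∧
    (a * Real.log (a/(a+b)) + b * Real.log (b/(a+b)) + (a+b) * Real.log 2 = 0 ↔ a = b) := by
  have hlog2 : 0 < Real.log 2 := Real.log_pos (by norm_num)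
  rcases ha.eq_or_lt with ha0 | ha0
  · rcases hb.eq_or_lt with hb0 | hb0
    · simp [← ha0, ← hb0]
    · subst ha0
      have hE : (0:ℝ) * Real.log (0/(0+b)) + b * Real.log (b/(0+b)) + (0+b) * Real.log 2
          = b * Real.log 2 := by
        rw [zero_add, div_self hb0.ne', Real.log_one]; ring
      rw [hE]
      refine ⟨mul_nonneg hb0.le hlog2.le, ?_, ?_⟩
      · intro h; nlinarith
      · intro h; rw [← h]; ring
  · rcases hb.eq_or_lt with hb0 | hb0
    · subst hb0
      have hE : a * Real.log (a/(a+0)) + 0 * Real.log (0/(a+0)) + (a+0) * Real.log 2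
          = a * Real.log 2 := by
        rw [add_zero, div_self ha0.ne', Real.log_one]; ring
      rw [hE]
      refine ⟨mul_nonneg ha0.le hlog2.le, ?_, ?_⟩
      · intro h; nlinarith
      · intro h; rw [h]; ring
    · have hs : 0 < a + b := by linarith
      set x := (a+b)/(2*a) with hxdef
      set y := (a+b)/(2*b) with hydef
      have hx : 0 < x := by positivity
      have hy : 0 < y := by positivity
      have hlx : Real.log x ≤ x - 1 := Real.log_le_sub_one_of_pos hx
      have hly : Real.log y ≤ y - 1 := Real.log_le_sub_one_of_pos hy
      have hxi : Real.log (a/(a+b)) = -(Real.log x + Real.log 2) := by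
        rw [hxdef, Real.log_div hs.ne' (by positivity), Real.log_div ha0.ne' hs.ne',
          Real.log_mul (by norm_num) ha0.ne']
        ring
      have hyi : Real.log (b/(a+b)) = -(Real.log y + Real.log 2) := by
        rw [hydef, Real.log_div hs.ne' (by positivity), Real.log_div hb0.ne' hs.ne',
          Real.log_mul (by norm_num) hb0.ne']
        ring
      have hE : a * Real.log (a/(a+b)) + b * Real.log (b/(a+b)) + (a+b) * Real.log 2
          = -(a * Real.log x + b * Real.log y) := by
        rw [hxi, hyi]; ring
      have hax : a * x = (a+b)/2 := by rw [hxdef]; field_simp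
      have hby : b * y = (a+b)/2 := by rw [hydef]; field_simp
      have h1 : a * Real.log x ≤ (b-a)/2 := by
        have := mul_le_mul_of_nonneg_left hlx ha0.le
        nlinarith
      have h2 : b * Real.log y ≤ (a-b)/2 := by
        have := mul_le_mul_of_nonneg_left hly hb0.le
        nlinarith
      constructor
      · rw [hE]; linarith
      · rw [hE]
        constructor
        · intro h
          by_contra hab
          have hx1 : x ≠ 1 := by
            rw [hxdef]
            intro hc
            rw [div_eq_one_iff_eq (by positivity)] at hc
            apply hab; linarith
          have hlx' : Real.log x < x - 1 := Real.log_lt_sub_one_of_pos hx hx1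
          have h1' : a * Real.log x < (b-a)/2 := by
            have := mul_lt_mul_of_pos_left hlx' ha0
            nlinarith
          linarith
        · intro h
          subst h
          have hx1 : x = 1 := by rw [hxdef]; field_simp; ring
          have hy1 : y = 1 := by rw [hydef]; field_simp; ring
          rw [hx1, hy1, Real.log_one]; ring

theorem stmt_6 {X : Type*} [MeasurableSpace X] (μ : Measure X) [SigmaFinite μ]
    (p q : X → ℝ) (hpm : Measurable p) (hqm : Measurable q)
    (hp0 : ∀ x, 0 ≤ p x) (hq0 : ∀ x, 0 ≤ q x)
    (hp1 : ∫ x, p x ∂μ = 1) (hq1 : ∫ x, q x ∂μ = 1)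
    (h1 : Integrable (fun x => p x * Real.log (p x / (p x + q x))) μ)
    (h2 : Integrable (fun x => q x * Real.log (q x / (p x + q x))) μ) :
    -Real.log 4 ≤ (∫ x, p x * Real.log (p x / (p x + q x)) ∂μ) +
        (∫ x, q x * Real.log (q x / (p x + q x)) ∂μ) ∧
    ((∫ x, p x * Real.log (p x / (p x + q x)) ∂μ) +
        (∫ x, q x * Real.log (q x / (p x + q x)) ∂μ) = -Real.log 4 ↔
      p =ᵐ[μ] q) := by
  have hpi : Integrable p μ := by
    by_contra h
    rw [integral_undef h] at hp1; norm_num at hp1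
  have hqi : Integrable q μ := by
    by_contra h
    rw [integral_undef h] at hq1; norm_num at hq1
  set g : X → ℝ := fun x => p x * Real.log (p x / (p x + q x)) +
      q x * Real.log (q x / (p x + q x)) + (p x + q x) * Real.log 2 with hgdef
  have hg3 : Integrable (fun x => (p x + q x) * Real.log 2) μ :=
    (hpi.add hqi).mul_const _
  have hgi : Integrable g μ := (h1.add h2).add hg3
  have hlog4 : Real.log 4 = 2 * Real.log 2 := by
    rw [show (4:ℝ) = 2^2 by norm_num, Real.log_pow]; push_cast; ring
  have hIg : ∫ x, g x ∂μ = (∫ x, p x * Real.log (p x / (p x + q x)) ∂μ) +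
      (∫ x, q x * Real.log (q x / (p x + q x)) ∂μ) + Real.log 4 := by
    have eA : ∫ x, g x ∂μ = (∫ x, (p x * Real.log (p x / (p x + q x)) +
        q x * Real.log (q x / (p x + q x))) ∂μ) + ∫ x, (p x + q x) * Real.log 2 ∂μ :=
      integral_add (h1.add h2) hg3
    have eB : (∫ x, (p x * Real.log (p x / (p x + q x)) +
        q x * Real.log (q x / (p x + q x))) ∂μ) = (∫ x, p x * Real.log (p x / (p x + q x)) ∂μ) +
        (∫ x, q x * Real.log (q x / (p x + q x)) ∂μ) := integral_add h1 h2
    have eC : ∫ x, (p x + q x) * Real.log 2 ∂μ = (∫ x, (p x + q x) ∂μ) * Real.log 2 :=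
      integral_mul_const _ _
    have eD : ∫ x, (p x + q x) ∂μ = 2 := by
      rw [integral_add hpi hqi, hp1, hq1]; norm_num
    rw [eA, eB, eC, eD, hlog4]
  have hgnn : ∀ x, 0 ≤ g x := fun x => (key_aux (p x) (q x) (hp0 x) (hq0 x)).1
  have hInn : 0 ≤ ∫ x, g x ∂μ := integral_nonneg hgnn
  constructor
  · linarith [hInn, hIg.symm.le, hIg.le]
  · constructor
    · intro h
      have hIg0 : ∫ x, g x ∂μ = 0 := by rw [hIg, h]; ring
      have hg0 : g =ᵐ[μ] 0 := by
        rwa [integral_eq_zero_iff_of_nonneg hgnn hgi] at hIg0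
      filter_upwards [hg0] with x hx
      exact (key_aux (p x) (q x) (hp0 x) (hq0 x)).2.1 hx
    · intro h
      have hg0 : g =ᵐ[μ] 0 := by
        filter_upwards [h] with x hx
        exact (key_aux (p x) (q x) (hp0 x) (hq0 x)).2.2 hx
      have hIg0 : ∫ x, g x ∂μ = 0 := by
        have := integral_congr_ae hg0
        simpa using this
      rw [hIg] at hIg0
      linarith
end

section
/- For a discrete version of the optimal discriminator: if p, q : Fin n → ℝ≥0 are probability mass functions, then the function D ↦ Σ_k [p_k·log D_k + q_k·log(1−D_k)] over D : Fin n → (0,1) is maximized by D_k = p_k/(p_k+q_k) at every k with p_k+q_k > 0. -/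
lemma term_le (a b d : ℝ) (ha : 0 < a) (hb : 0 < b) (hd : 0 < d) (hd1 : d < 1) :
    a * Real.log d + b * Real.log (1 - d) ≤
      a * Real.log (a / (a + b)) + b * Real.log (b / (a + b)) := by
  have hab : 0 < a + b := by linarith
  have h1d : 0 < 1 - d := by linarith
  have hx : 0 < d * (a + b) / a := by positivity
  have hy : 0 < (1 - d) * (a + b) / b := by positivity
  have l1 : Real.log (d * (a + b) / a) ≤ d * (a + b) / a - 1 :=
    Real.log_le_sub_one_of_pos hx
  have l2 : Real.log ((1 - d) * (a + b) / b) ≤ (1 - d) * (a + b) / b - 1 :=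
    Real.log_le_sub_one_of_pos hy
  have e1 : Real.log (d * (a + b) / a) = Real.log d - Real.log (a / (a + b)) := by
    rw [Real.log_div (by positivity) ha.ne', Real.log_mul hd.ne' hab.ne',
      Real.log_div ha.ne' hab.ne']
    ring
  have e2 : Real.log ((1 - d) * (a + b) / b) =
      Real.log (1 - d) - Real.log (b / (a + b)) := by
    rw [Real.log_div (by positivity) hb.ne', Real.log_mul h1d.ne' hab.ne',
      Real.log_div hb.ne' hab.ne']
    ring
  rw [e1] at l1
  rw [e2] at l2
  have m1 : a * (Real.log d - Real.log (a / (a + b))) ≤ d * (a + b) - a := by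
    have := mul_le_mul_of_nonneg_left l1 ha.le
    calc a * (Real.log d - Real.log (a / (a + b))) ≤ a * (d * (a + b) / a - 1) := this
      _ = d * (a + b) - a := by field_simp
  have m2 : b * (Real.log (1 - d) - Real.log (b / (a + b))) ≤ (1 - d) * (a + b) - b := by
    have := mul_le_mul_of_nonneg_left l2 hb.le
    calc b * (Real.log (1 - d) - Real.log (b / (a + b))) ≤ b * ((1 - d) * (a + b) / b - 1) := this
      _ = (1 - d) * (a + b) - b := by field_simp
  nlinarith [m1, m2]

theorem stmt_15 (n : ℕ) (p q : Fin n → ℝ)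
    (hp : ∀ k, 0 < p k) (hq : ∀ k, 0 < q k)
    (hp1 : ∑ k, p k = 1) (hq1 : ∑ k, q k = 1) :
    ∀ D : Fin n → ℝ, (∀ k, 0 < D k ∧ D k < 1) →
      ∑ k, (p k * Real.log (D k) + q k * Real.log (1 - D k)) ≤
        ∑ k, (p k * Real.log (p k / (p k + q k)) +
              q k * Real.log (q k / (p k + q k))) := by
  intro D hD
  exact Finset.sum_le_sum fun k _ =>
    term_le (p k) (q k) (D k) (hp k) (hq k) (hD k).1 (hD k).2
end
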